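/- If ρ is a density operator on a finite dimensional Hilbert space and σ is a positive semidefinite operator with 0 < Tr(σ) ≤ 1 and supp ρ ⊆ supp σ, then the relative von Neumann entropy H(ρ||σ) = Tr(ρ log ρ − ρ log σ) is nonnegative. -/

import Mathlib

open Matrix

/-- The logarithm of a Hermitian matrix, via functional calculus on its support
(using the convention `Real.log 0 = 0`, i.e. `0 log 0 = 0`). For non-Hermitian
input we return the junk value `0`. -/
noncomputable def matLog {n : Type*} [Fintype n] [DecidableEq n] (A : Matrix n n ℝ) :
    Matrix n n ℝ :=
  if hA : A.IsHermitian then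
    (hA.eigenvectorUnitary : Matrix n n ℝ) *
      Matrix.diagonal (fun i => Real.log (hA.eigenvalues i)) *
      (star hA.eigenvectorUnitary : Matrix n n ℝ)
  else 0

/-- The relative von Neumann entropy `H(ρ‖σ) = Tr(ρ log ρ − ρ log σ)`. -/
noncomputable def relEntropy {n : Type*} [Fintype n] [DecidableEq n]
    (ρ σ : Matrix n n ℝ) : ℝ :=
  (ρ * matLog ρ - ρ * matLog σ).trace

/-!
Diagonalise `ρ = ∑ pᵢ uᵢ uᵢᵀ` and `σ = ∑ qⱼ vⱼ vⱼᵀ` in orthonormal eigenbases. The weights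
`⟨uᵢ, vⱼ⟩²` form a doubly stochastic matrix, so
`H(ρ‖σ) = ∑ᵢⱼ ⟨uᵢ, vⱼ⟩² (pᵢ log pᵢ - pᵢ log qⱼ)`, and termwise `p log p - p log q ≥ p - q`
(from `log x ≤ x - 1`) gives `H(ρ‖σ) ≥ Tr ρ - Tr σ ≥ 0`. The termwise bound fails only when
`p > 0 = q`, and the support condition makes `⟨uᵢ, vⱼ⟩ = 0` exactly in that case.
-/

theorem Real.sub_le_mul_log_sub_mul_log {p q : ℝ} (hp : 0 ≤ p) (hq : 0 ≤ q)
    (hpq : q = 0 → p = 0) : p - q ≤ p * Real.log p - p * Real.log q := by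
  rcases hp.eq_or_lt with rfl | hp
  · simpa using hq
  have hq : 0 < q := hq.lt_of_ne fun h => hp.ne' (hpq h.symm)
  have h := Real.log_le_sub_one_of_pos (div_pos hq hp)
  rw [Real.log_div hq.ne' hp.ne', le_sub_iff_add_le, le_div_iff₀ hp] at h
  linarith

namespace Matrix

variable {n : Type*} [Fintype n] [DecidableEq n]

theorem sum_sq_apply_right_of_mem_unitaryGroup {U : Matrix n n ℝ}
    (hU : U ∈ unitaryGroup n ℝ) (i : n) : ∑ j, U i j ^ 2 = 1 := by
  simpa [mul_apply, sq] using congr_fun₂ (mem_unitaryGroup_iff.mp hU) i i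

theorem sum_sq_apply_left_of_mem_unitaryGroup {U : Matrix n n ℝ}
    (hU : U ∈ unitaryGroup n ℝ) (j : n) : ∑ i, U i j ^ 2 = 1 := by
  simpa [mul_apply, sq] using congr_fun₂ (mem_unitaryGroup_iff'.mp hU) j j

theorem sum_sub_sum_le_sum_mul_log_sub_sum_mul_log {W : Matrix n n ℝ}
    (hW : W ∈ unitaryGroup n ℝ) {p q : n → ℝ} (hp : ∀ i, 0 ≤ p i) (hq : ∀ j, 0 ≤ q j)
    (hpq : ∀ i j, q j = 0 → p i * W i j = 0) :
    ∑ i, p i - ∑ j, q j ≤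
      ∑ i, p i * Real.log (p i) - ∑ i, ∑ j, p i * W i j ^ 2 * Real.log (q j) := by
  have hterm : ∀ i j, W i j ^ 2 * (p i - q j) ≤
      W i j ^ 2 * (p i * Real.log (p i) - p i * Real.log (q j)) := by
    intro i j
    rcases eq_or_ne (W i j) 0 with hWij | hWij
    · simp [hWij]
    refine mul_le_mul_of_nonneg_left
      (Real.sub_le_mul_log_sub_mul_log (hp i) (hq j) fun hqj => ?_) (sq_nonneg _)
    exact (mul_eq_zero.mp (hpq i j hqj)).resolve_right hWij
  calc ∑ i, p i - ∑ j, q j = ∑ i, ∑ j, W i j ^ 2 * (p i - q j) := by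
        simp only [mul_sub, Finset.sum_sub_distrib, ← Finset.sum_mul,
          sum_sq_apply_right_of_mem_unitaryGroup hW]
        rw [Finset.sum_comm (f := fun i j => W i j ^ 2 * q j)]
        simp only [← Finset.sum_mul, sum_sq_apply_left_of_mem_unitaryGroup hW, one_mul]
    _ ≤ ∑ i, ∑ j, W i j ^ 2 * (p i * Real.log (p i) - p i * Real.log (q j)) :=
        Finset.sum_le_sum fun i _ => Finset.sum_le_sum fun j _ => hterm i j
    _ = ∑ i, p i * Real.log (p i) - ∑ i, ∑ j, p i * W i j ^ 2 * Real.log (q j) := by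
        simp only [mul_sub, Finset.sum_sub_distrib, ← Finset.sum_mul,
          sum_sq_apply_right_of_mem_unitaryGroup hW, one_mul]
        congr 1
        exact Finset.sum_congr rfl fun i _ => Finset.sum_congr rfl fun j _ => by ring

theorem trace_conj_diagonal_mul_conj_diagonal (U V : Matrix n n ℝ) (a b : n → ℝ) :
    (U * diagonal a * star U * (V * diagonal b * star V)).trace =
      ∑ i, ∑ j, a i * (star U * V) i j ^ 2 * b j := by
  have hcycle : (U * diagonal a * star U * (V * diagonal b * star V)).trace =
      (diagonal a * (star U * V) * diagonal b * star (star U * V)).trace := by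
    rw [star_mul, star_star]
    simp only [Matrix.mul_assoc]
    rw [trace_mul_comm]
    simp only [Matrix.mul_assoc]
  rw [hcycle, trace]
  refine Finset.sum_congr rfl fun i _ => ?_
  simp only [diag_apply, mul_apply (M := _ * diagonal b), mul_diagonal, diagonal_mul, star_apply,
    star_trivial]
  exact Finset.sum_congr rfl fun j _ => by ring

theorem IsHermitian.eigenvectorUnitary_mul_diagonal_mul_star {A : Matrix n n ℝ}
    (hA : A.IsHermitian) :
    (hA.eigenvectorUnitary : Matrix n n ℝ) * diagonal hA.eigenvalues *
      star (hA.eigenvectorUnitary : Matrix n n ℝ) = A := by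
  simpa [RCLike.ofReal_real_eq_id, Unitary.conjStarAlgAut_apply] using hA.spectral_theorem.symm

noncomputable def IsHermitian.eigenOverlap {A B : Matrix n n ℝ} (hA : A.IsHermitian)
    (hB : B.IsHermitian) : unitaryGroup n ℝ :=
  star hA.eigenvectorUnitary * hB.eigenvectorUnitary

theorem IsHermitian.eigenOverlap_self {A : Matrix n n ℝ} (hA : A.IsHermitian) :
    hA.eigenOverlap hA = 1 :=
  Unitary.star_mul_self _

theorem IsHermitian.eigenOverlap_apply {A B : Matrix n n ℝ} (hA : A.IsHermitian)
    (hB : B.IsHermitian) (i j : n) :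
    (hA.eigenOverlap hB : Matrix n n ℝ) i j =
      ⇑(hA.eigenvectorBasis i) ⬝ᵥ ⇑(hB.eigenvectorBasis j) := by
  simp [eigenOverlap, mul_apply, dotProduct]

theorem IsHermitian.eigenvalues_mul_eigenOverlap_eq_zero {A B : Matrix n n ℝ}
    (hA : A.IsHermitian) (hB : B.IsHermitian) (hker : ∀ v, B *ᵥ v = 0 → A *ᵥ v = 0) {j : n}
    (hj : hB.eigenvalues j = 0) (i : n) :
    hA.eigenvalues i * (hA.eigenOverlap hB : Matrix n n ℝ) i j = 0 := by
  set u := ⇑(hA.eigenvectorBasis i)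
  set v := ⇑(hB.eigenvectorBasis j)
  have hBv : B *ᵥ v = 0 := by simp [v, hB.mulVec_eigenvectorBasis, hj]
  have hAu : A *ᵥ u = u ᵥ* A := by
    rw [← vecMul_transpose, ← conjTranspose_eq_transpose_of_trivial, hA.eq]
  calc hA.eigenvalues i * (hA.eigenOverlap hB : Matrix n n ℝ) i j
      = (A *ᵥ u) ⬝ᵥ v := by
        rw [eigenOverlap_apply, hA.mulVec_eigenvectorBasis, smul_dotProduct, smul_eq_mul]
    _ = u ⬝ᵥ (A *ᵥ v) := by rw [hAu, dotProduct_mulVec]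
    _ = 0 := by rw [hker v hBv, dotProduct_zero]

end Matrix

section

variable {n : Type*} [Fintype n] [DecidableEq n]

theorem matLog_of_isHermitian {A : Matrix n n ℝ} (hA : A.IsHermitian) :
    matLog A = (hA.eigenvectorUnitary : Matrix n n ℝ) *
      diagonal (fun i => Real.log (hA.eigenvalues i)) *
      star (hA.eigenvectorUnitary : Matrix n n ℝ) :=
  dif_pos hA

theorem trace_mul_matLog {A B : Matrix n n ℝ} (hA : A.IsHermitian) (hB : B.IsHermitian) :
    (A * matLog B).trace = ∑ i, ∑ j, hA.eigenvalues i *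
      (hA.eigenOverlap hB : Matrix n n ℝ) i j ^ 2 * Real.log (hB.eigenvalues j) := by
  conv_lhs => rw [← hA.eigenvectorUnitary_mul_diagonal_mul_star, matLog_of_isHermitian hB]
  rw [trace_conj_diagonal_mul_conj_diagonal]
  rfl

theorem relEntropy_eq_sum {A B : Matrix n n ℝ} (hA : A.IsHermitian) (hB : B.IsHermitian) :
    relEntropy A B = ∑ i, hA.eigenvalues i * Real.log (hA.eigenvalues i) -
      ∑ i, ∑ j, hA.eigenvalues i * (hA.eigenOverlap hB : Matrix n n ℝ) i j ^ 2 *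
        Real.log (hB.eigenvalues j) := by
  rw [relEntropy, trace_sub, trace_mul_matLog hA hB, trace_mul_matLog hA hA, hA.eigenOverlap_self]
  simp [one_apply]

end

theorem relEntropy_nonneg_general {n : Type*} [Fintype n] [DecidableEq n]
    (ρ σ : Matrix n n ℝ) (hρ : ρ.PosSemidef) (hρtr : ρ.trace = 1)
    (hσ : σ.PosSemidef) (hσtr1 : σ.trace ≤ 1)
    (hsupp : ∀ v : n → ℝ, σ.mulVec v = 0 → ρ.mulVec v = 0) :
    0 ≤ relEntropy ρ σ := by
  have hsum_p : ∑ i, hρ.1.eigenvalues i = 1 := by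
    simpa [hρtr] using hρ.1.trace_eq_sum_eigenvalues.symm
  have hsum_q : ∑ j, hσ.1.eigenvalues j = σ.trace := by
    simpa using hσ.1.trace_eq_sum_eigenvalues.symm
  rw [relEntropy_eq_sum hρ.1 hσ.1]
  calc 0 ≤ ∑ i, hρ.1.eigenvalues i - ∑ j, hσ.1.eigenvalues j := by linarith
    _ ≤ _ := sum_sub_sum_le_sum_mul_log_sub_sum_mul_log (hρ.1.eigenOverlap hσ.1).2
        hρ.eigenvalues_nonneg hσ.eigenvalues_nonneg
        fun _ _ hq => hρ.1.eigenvalues_mul_eigenOverlap_eq_zero hσ.1 hsupp hq _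

/-- if ρ is a density operator and σ is positive semidefinite with
0 < Tr σ ≤ 1 and supp ρ ⊆ supp σ (equivalently, ker σ ⊆ ker ρ), then the relative
von Neumann entropy H(ρ‖σ) is nonnegative. -/
theorem relEntropy_nonneg {n : Type*} [Fintype n] [DecidableEq n]
    (ρ σ : Matrix n n ℝ) (hρ : ρ.PosSemidef) (hρtr : ρ.trace = 1)
    (hσ : σ.PosSemidef) (hσtr0 : 0 < σ.trace) (hσtr1 : σ.trace ≤ 1)
    (hsupp : ∀ v : n → ℝ, σ.mulVec v = 0 → ρ.mulVec v = 0) :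
    0 ≤ relEntropy ρ σ :=
  relEntropy_nonneg_general ρ σ hρ hρtr hσ hσtr1 hsupp
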